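/- arXiv:2007.12291 — 4 statements merged into one kernel-verified Lean document; each statement's English description precedes it below -/
import Mathlib

section
/- Suppose M is an n×n real matrix with M = H L H⁻¹, ‖L‖ ≤ 1 - γ, ‖H‖‖H⁻¹‖ ≤ κ for 0 < γ ≤ 1, κ ≥ 1, and let Q, R' be positive semidefinite matrices of appropriate sizes with ‖Q + R'‖ ≤ c. Then the matrix P := Σ_{t=0}^∞ (M^t)ᵀ (Q + R') M^t is well-defined (the series converges) and satisfies ‖P‖ ≤ c κ² / γ. -/
open Matrix
open scoped Matrix.Norms.L2Operator

/-!
Since `M ^ t = H * L ^ t * H⁻¹`, we have `‖M ^ t‖ ≤ κ (1 - γ) ^ t`, so the `t`-th term has norm at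
most `c κ² (1 - γ) ^ t`; the series is dominated by a geometric series with sum `c κ² / γ`.
-/

theorem norm_mul_pow_mul_le {R : Type*} [SeminormedRing R] (a b c : R) (t : ℕ) :
    ‖a * b ^ t * c‖ ≤ ‖a‖ * ‖b‖ ^ t * ‖c‖ := by
  rcases t.eq_zero_or_pos with rfl | ht
  · simpa using norm_mul_le a c
  · calc ‖a * b ^ t * c‖ ≤ ‖a‖ * ‖b ^ t‖ * ‖c‖ := norm_mul₃_le
      _ ≤ ‖a‖ * ‖b‖ ^ t * ‖c‖ := by gcongr; exact norm_pow_le' b ht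

theorem norm_star_mul_mul_self_le {R : Type*} [NonUnitalSeminormedRing R] [StarRing R]
    [NormedStarGroup R] (a s : R) : ‖star a * s * a‖ ≤ ‖a‖ ^ 2 * ‖s‖ :=
  calc ‖star a * s * a‖ ≤ ‖star a‖ * ‖s‖ * ‖a‖ := norm_mul₃_le
    _ = ‖a‖ ^ 2 * ‖s‖ := by rw [norm_star]; ring

theorem summable_and_norm_tsum_le_of_norm_le_geometric {E : Type*} [NormedAddCommGroup E]
    [CompleteSpace E] {f : ℕ → E} {C r : ℝ} (hr0 : 0 ≤ r) (hr1 : r < 1)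
    (hf : ∀ t, ‖f t‖ ≤ C * r ^ t) : Summable f ∧ ‖∑' t, f t‖ ≤ C / (1 - r) := by
  have hgeo : HasSum (fun t ↦ C * r ^ t) (C / (1 - r)) :=
    (hasSum_geometric_of_lt_one hr0 hr1).mul_left C
  exact ⟨.of_norm_bounded hgeo.summable hf, tsum_of_norm_bounded hgeo hf⟩

theorem stmt_2_general {n : ℕ} (M H L Q R' : Matrix (Fin n) (Fin n) ℝ)
    (hH : IsUnit H) (hM : M = H * L * H⁻¹)
    (γ κ c : ℝ) (hγ0 : 0 < γ)
    (hL : ‖L‖ ≤ 1 - γ) (hHκ : ‖H‖ * ‖H⁻¹‖ ≤ κ)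
    (hc : ‖Q + R'‖ ≤ c) :
    Summable (fun t : ℕ => (M ^ t)ᵀ * (Q + R') * M ^ t) ∧
      ‖∑' t : ℕ, (M ^ t)ᵀ * (Q + R') * M ^ t‖ ≤ c * κ ^ 2 / γ := by
  have hρ0 : 0 ≤ 1 - γ := (norm_nonneg L).trans hL
  have hc0 : 0 ≤ c := (norm_nonneg _).trans hc
  have hκ0 : 0 ≤ κ := (by positivity : 0 ≤ ‖H‖ * ‖H⁻¹‖).trans hHκ
  have hpow (t : ℕ) : M ^ t = H * L ^ t * H⁻¹ := by
    rw [hM, ← hH.unit_spec, ← coe_units_inv, Units.conj_pow]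
  have hMt (t : ℕ) : ‖M ^ t‖ ≤ κ * (1 - γ) ^ t :=
    calc ‖M ^ t‖ ≤ ‖H‖ * ‖L‖ ^ t * ‖H⁻¹‖ := hpow t ▸ norm_mul_pow_mul_le H L H⁻¹ t
      _ = ‖H‖ * ‖H⁻¹‖ * ‖L‖ ^ t := by ring
      _ ≤ κ * (1 - γ) ^ t := by gcongr
  have hterm (t : ℕ) : ‖(M ^ t)ᵀ * (Q + R') * M ^ t‖ ≤ c * κ ^ 2 * (1 - γ) ^ t :=
    calc ‖(M ^ t)ᵀ * (Q + R') * M ^ t‖ ≤ ‖M ^ t‖ ^ 2 * ‖Q + R'‖ := by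
          rw [← conjTranspose_eq_transpose_of_trivial]
          exact norm_star_mul_mul_self_le _ _
      _ ≤ (κ * (1 - γ) ^ t) ^ 2 * c := by gcongr; exact hMt t
      _ = c * κ ^ 2 * ((1 - γ) ^ t * (1 - γ) ^ t) := by ring
      _ ≤ c * κ ^ 2 * (1 - γ) ^ t := by
          gcongr
          exact mul_le_of_le_one_left (by positivity) (pow_le_one₀ hρ0 (by linarith))
  simpa only [sub_sub_cancel] using
    summable_and_norm_tsum_le_of_norm_le_geometric hρ0 (by linarith) hterm

theorem stmt_2 {n : ℕ} (M H L Q R' : Matrix (Fin n) (Fin n) ℝ)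
    (hH : IsUnit H) (hM : M = H * L * H⁻¹)
    (γ κ c : ℝ) (hγ0 : 0 < γ) (hγ1 : γ ≤ 1) (hκ : 1 ≤ κ)
    (hL : ‖L‖ ≤ 1 - γ) (hHκ : ‖H‖ * ‖H⁻¹‖ ≤ κ)
    (hQ : Q.PosSemidef) (hR : R'.PosSemidef) (hc : ‖Q + R'‖ ≤ c) :
    Summable (fun t : ℕ => (M ^ t)ᵀ * (Q + R') * M ^ t) ∧
      ‖∑' t : ℕ, (M ^ t)ᵀ * (Q + R') * M ^ t‖ ≤ c * κ ^ 2 / γ :=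
  stmt_2_general M H L Q R' hH hM γ κ c hγ0 hL hHκ hc
end

section
/- Let V and V' be m×m symmetric positive definite matrices with V ≼ V'. Then ‖V'^{1/2} x‖² ≤ (det(V')/det(V)) ‖V^{1/2} x‖² holds for every vector x ∈ ℝᵐ. -/
open Matrix Finset

lemma key_lem {m : ℕ} (N : Matrix (Fin m) (Fin m) ℝ) (hN : N.IsHermitian)
    (h1 : (N - 1).PosSemidef) (y : Fin m → ℝ) :
    y ⬝ᵥ (N *ᵥ y) ≤ N.det * (y ⬝ᵥ y) := by
  classical
  -- eigenvalues ≥ 1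
  have hev : ∀ i, 1 ≤ hN.eigenvalues i := by
    intro i
    have hv := h1.dotProduct_mulVec_nonneg (hN.eigenvectorBasis i)
    have hnorm : ((hN.eigenvectorBasis i : EuclideanSpace ℝ (Fin m)) ⬝ᵥ
        (hN.eigenvectorBasis i : EuclideanSpace ℝ (Fin m))) = 1 := by
      have h0 := hN.eigenvectorBasis.orthonormal.1 i
      have h2 : (inner ℝ (hN.eigenvectorBasis i) (hN.eigenvectorBasis i) : ℝ) = 1 := by
        rw [real_inner_self_eq_norm_sq, h0]; norm_num
      simpa only [EuclideanSpace.inner_eq_star_dotProduct, star_trivial] using h2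
    have heq := hN.eigenvalues_eq i
    simp only [RCLike.re_to_real, star_trivial] at hv heq
    rw [sub_mulVec, dotProduct_sub, one_mulVec, hnorm] at hv
    rw [heq]
    show (1:ℝ) ≤ (hN.eigenvectorBasis i : EuclideanSpace ℝ (Fin m)) ⬝ᵥ
        N *ᵥ (hN.eigenvectorBasis i : EuclideanSpace ℝ (Fin m))
    linarith
  -- det = prod of eigenvalues
  have hdet : N.det = ∏ i, hN.eigenvalues i := by simpa using hN.det_eq_prod_eigenvalues
  -- single eigenvalue ≤ det
  have hsle : ∀ i, hN.eigenvalues i ≤ N.det := by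
    intro i
    rw [hdet, ← Finset.prod_erase_mul Finset.univ _ (Finset.mem_univ i)]
    have h1' : (1:ℝ) ≤ ∏ j ∈ Finset.univ.erase i, hN.eigenvalues j := by
      calc (1:ℝ) = ∏ j ∈ Finset.univ.erase i, 1 := by simp
        _ ≤ _ := Finset.prod_le_prod (by intros; norm_num) (fun j _ => hev j)
    nlinarith [hev i]
  set U : Matrix (Fin m) (Fin m) ℝ := hN.eigenvectorUnitary.1 with hU
  have hstar : star U = Uᵀ := by ext i j; simp [Matrix.star_apply]
  have hstar' : (star U)ᵀ = U := by rw [hstar, transpose_transpose]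
  set w : Fin m → ℝ := star U *ᵥ y with hw
  have hvU : y ᵥ* U = w := by rw [hw, hstar, mulVec_transpose]
  have hdiag : ∀ v : Fin m → ℝ,
      v ⬝ᵥ (diagonal (RCLike.ofReal ∘ hN.eigenvalues) *ᵥ v) = ∑ i, hN.eigenvalues i * (v i)^2 := by
    intro v
    rw [dotProduct]
    refine Finset.sum_congr rfl fun i _ => ?_
    rw [mulVec_diagonal]
    simp [RCLike.ofReal]
    ring
  have hyN : y ⬝ᵥ (N *ᵥ y) = ∑ i, hN.eigenvalues i * (w i)^2 := by
    conv_lhs => rw [hN.spectral_theorem]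
    rw [Unitary.conjStarAlgAut_apply]
    rw [← hU, ← mulVec_mulVec, ← mulVec_mulVec, dotProduct_mulVec, hvU, ← hw, hdiag]
  have hUU : U * star U = 1 := (Unitary.mem_iff.mp hN.eigenvectorUnitary.2).2
  have hyy : y ⬝ᵥ y = ∑ i, (w i)^2 := by
    have : w ⬝ᵥ w = y ⬝ᵥ y := by
      rw [hw, dotProduct_mulVec, ← mulVec_transpose, hstar', mulVec_mulVec, hUU, one_mulVec]
    rw [← this, dotProduct]
    exact Finset.sum_congr rfl fun i _ => (sq (w i)).symm ▸ by ring
  rw [hyN, hyy, Finset.mul_sum]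
  exact Finset.sum_le_sum fun i _ =>
    mul_le_mul_of_nonneg_right (hsle i) (sq_nonneg _)

theorem stmt_11 {m : ℕ} (V V' : Matrix (Fin m) (Fin m) ℝ)
    (hV : V.PosDef) (hV' : V'.PosDef) (hle : (V' - V).PosSemidef)
    (x : Fin m → ℝ) :
    x ⬝ᵥ (V' *ᵥ x) ≤ V'.det / V.det * (x ⬝ᵥ (V *ᵥ x)) := by
  classical
  set A := (open MatrixOrder in CFC.sqrt V) with hA
  have hApsd : A.PosSemidef := by
    open MatrixOrder in exact nonneg_iff_posSemidef.mp (CFC.sqrt_nonneg V)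
  have hAH : A.IsHermitian := hApsd.isHermitian
  have hAA : A * A = V := by
    open MatrixOrder in exact CFC.sqrt_mul_sqrt_self V (nonneg_iff_posSemidef.mpr hV.posSemidef)
  have hdetA : A.det * A.det = V.det := by rw [← det_mul, hAA]
  have hVdet : 0 < V.det := hV.det_pos
  have hdetA0 : A.det ≠ 0 := fun h => by simp [h] at hdetA; exact hVdet.ne' hdetA.symm
  have hAinv : IsUnit A.det := isUnit_iff_ne_zero.mpr hdetA0
  have hA1 : A⁻¹ * A = 1 := nonsing_inv_mul A hAinv
  have hA2 : A * A⁻¹ = 1 := mul_nonsing_inv A hAinv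
  have hAiH : (A⁻¹).IsHermitian := hAH.inv
  have hAT : Aᵀ = A := by
    ext i j; have := congrFun (congrFun hAH i) j; simpa using this
  have hAiT : (A⁻¹)ᵀ = A⁻¹ := by
    ext i j; have := congrFun (congrFun hAiH i) j; simpa using this
  set N := A⁻¹ * V' * A⁻¹ with hN
  have hNH : N.IsHermitian := by
    rw [hN, IsHermitian, conjTranspose_mul, conjTranspose_mul, hAiH.eq, hV'.isHermitian.eq]
    rw [mul_assoc]
  have hNid : A⁻¹ * V * A⁻¹ = 1 := by
    rw [← hAA, ← mul_assoc, mul_assoc (A⁻¹ * A), hA1, hA2, one_mul]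
  have hN1 : (N - 1).PosSemidef := by
    have : N - 1 = A⁻¹ * (V' - V) * (A⁻¹)ᴴ := by
      rw [hAiH.eq, hN, ← hNid, Matrix.mul_sub, Matrix.sub_mul]
    rw [this]
    exact hle.mul_mul_conjTranspose_same A⁻¹
  set y := A *ᵥ x with hy
  have e1 : (A *ᵥ x) ᵥ* A⁻¹ = x := by
    rw [← mulVec_transpose, hAiT, mulVec_mulVec, hA1, one_mulVec]
  have h1 : y ⬝ᵥ (N *ᵥ y) = x ⬝ᵥ (V' *ᵥ x) := by
    rw [hy, hN, mulVec_mulVec, mul_assoc (A⁻¹ * V') A⁻¹ A, hA1, mul_one,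
      dotProduct_mulVec, ← vecMul_vecMul, e1, ← mulVec_transpose]
    have hV'T : V'ᵀ = V' := by
      ext i j; have := congrFun (congrFun hV'.isHermitian i) j; simpa using this
    rw [hV'T, dotProduct_comm]
  have h2 : y ⬝ᵥ y = x ⬝ᵥ (V *ᵥ x) := by
    rw [hy, dotProduct_mulVec, ← mulVec_transpose, hAT, mulVec_mulVec, hAA, dotProduct_comm]
  have h3 : N.det = V'.det / V.det := by
    rw [hN, det_mul, det_mul, det_nonsing_inv, Ring.inverse_eq_inv', ← hdetA]
    field_simp
  rw [← h1, ← h2, ← h3]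
  exact key_lem N hNH hN1 y
end

section
/- Let s be a real random variable with mean zero, variance Var[s] ≥ v > 0, and sub-Gaussian tails P(s² ≥ a²) ≤ 2 exp(-a²/(2σ²)) for all a ≥ 0. Then for any σ₁², σ₂² with 0 < σ₁² ≤ σ₂², the probability P(s² > σ₁²) ≥ (v - σ₁² - 4σ²(1 + σ₂²/(2σ²)) exp(-σ₂²/(2σ²))) / σ₂². -/
/-!
Pointwise, `s² ≤ σ₁² + σ₂² · 1{s² > σ₁²} + (s² - σ₂²)⁺`. Taking expectations, `E s²` is at
most `σ₁² + σ₂² P(s² > σ₁²) + E (s² - σ₂²)⁺`, and by the layer-cake formula the sub-Gaussian tail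
gives `E (s² - σ₂²)⁺ = ∫_{t > 0} P(s² ≥ t + σ₂²) dt ≤ 4σ² exp(-σ₂²/(2σ²))`; the resulting bound is stronger than
the claim by the nonnegative term `2σ₂² exp(-σ₂²/(2σ²))`.
-/

open MeasureTheory Real Set

section

variable {Ω : Type*} [MeasurableSpace Ω] {μ : Measure Ω} {g : Ω → ℝ}

lemma integral_max_sub_le_of_measure_le_exp [IsFiniteMeasure μ] (hg : Integrable g μ)
    {C β c : ℝ} (hC : 0 ≤ C) (hβ : 0 < β)
    (htail : ∀ t, c ≤ t → μ {ω | t ≤ g ω} ≤ ENNReal.ofReal (C * exp (-t / β))) :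
    ∫ ω, max (g ω - c) 0 ∂μ ≤ C * β * exp (-c / β) := by
  have hint : Integrable (fun ω => max (g ω - c) 0) μ := (hg.sub (integrable_const c)).pos_part
  have hrate : -β⁻¹ < 0 := by simpa using hβ
  rw [hint.integral_eq_integral_meas_le (ae_of_all _ fun _ => le_max_right _ _)]
  calc ∫ t in Ioi 0, μ.real {ω | t ≤ max (g ω - c) 0}
      ≤ ∫ t in Ioi 0, C * exp (-c / β) * exp (-β⁻¹ * t) := by
        refine integral_mono_of_nonneg (ae_of_all _ fun _ => measureReal_nonneg)
          ((integrableOn_exp_mul_Ioi hrate 0).const_mul _) ?_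
        filter_upwards [ae_restrict_mem measurableSet_Ioi] with t (ht : 0 < t)
        have hsub : {ω | t ≤ max (g ω - c) 0} ⊆ {ω | t + c ≤ g ω} := fun ω hω => by
          simp only [mem_ofPred_eq, le_max_iff] at hω ⊢
          rcases hω with h | h <;> linarith
        have hexp : exp (-(t + c) / β) = exp (-c / β) * exp (-β⁻¹ * t) := by
          rw [← exp_add]; congr 1; field_simp; ring
        rw [mul_assoc, ← hexp]
        exact ENNReal.toReal_le_of_le_ofReal (by positivity)
          ((measure_mono hsub).trans (htail _ (by linarith)))
    _ = C * β * exp (-c / β) := by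
        rw [integral_const_mul, integral_exp_mul_Ioi hrate]
        field_simp
        simp

lemma integral_le_add_mul_measureReal_add_integral_max_sub [IsProbabilityMeasure μ]
    (hg : Integrable g μ) {a : ℝ} (ha : 0 ≤ a) (b : ℝ) :
    ∫ ω, g ω ∂μ ≤ a + b * μ.real {ω | a < g ω} + ∫ ω, max (g ω - b) 0 ∂μ := by
  set A := {ω | a < g ω}
  have hA : NullMeasurableSet A μ := nullMeasurableSet_lt aemeasurable_const hg.aemeasurable
  have hind : Integrable (A.indicator fun _ => b) μ := (integrable_const b).indicator₀ hA
  have hconst_ind : Integrable (fun ω => a + A.indicator (fun _ => b) ω) μ :=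
    (integrable_const a).add hind
  have hpos : Integrable (fun ω => max (g ω - b) 0) μ := (hg.sub (integrable_const b)).pos_part
  have hpt : ∀ ω, g ω ≤ a + A.indicator (fun _ => b) ω + max (g ω - b) 0 := fun ω => by
    by_cases hω : ω ∈ A
    · rw [indicator_of_mem hω]
      have := le_max_left (g ω - b) 0
      linarith
    · rw [indicator_of_notMem hω]
      have := le_max_right (g ω - b) 0
      simp only [A, mem_ofPred_eq, not_lt] at hω
      linarith
  calc ∫ ω, g ω ∂μ ≤ ∫ ω, (a + A.indicator (fun _ => b) ω + max (g ω - b) 0) ∂μ :=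
        integral_mono hg (hconst_ind.add hpos) hpt
    _ = a + b * μ.real A + ∫ ω, max (g ω - b) 0 ∂μ := by
        rw [integral_add hconst_ind hpos, integral_add (integrable_const a) hind,
          integral_indicator₀ hA, setIntegral_const, integral_const]
        simp [mul_comm]
end

theorem stmt_12_general {Ω : Type*} [MeasurableSpace Ω] (μ : Measure Ω)
    [IsProbabilityMeasure μ] (s : Ω → ℝ)
    (hint : Integrable (fun ω => (s ω) ^ 2) μ)
    (v σ2 s1 s2 : ℝ) (hσ2 : 0 < σ2)
    (hvar : v ≤ ∫ ω, (s ω) ^ 2 ∂μ)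
    (htail : ∀ a : ℝ, 0 ≤ a →
      μ {ω | a ^ 2 ≤ (s ω) ^ 2} ≤ ENNReal.ofReal (2 * exp (-a ^ 2 / (2 * σ2))))
    (hs1 : 0 < s1) (hs12 : s1 ≤ s2) :
    ENNReal.ofReal
        ((v - s1 - 4 * σ2 * (1 + s2 / (2 * σ2)) * exp (-s2 / (2 * σ2))) / s2) ≤
      μ {ω | s1 < (s ω) ^ 2} := by
  have hs2 : 0 < s2 := hs1.trans_le hs12
  have htail_sq : ∀ t, s2 ≤ t →
      μ {ω | t ≤ s ω ^ 2} ≤ ENNReal.ofReal (2 * exp (-t / (2 * σ2))) := fun t ht => by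
    simpa [sq_sqrt (hs2.le.trans ht)] using htail (√t) (sqrt_nonneg t)
  have hexcess := integral_max_sub_le_of_measure_le_exp hint zero_le_two (by positivity) htail_sq
  have hsplit := integral_le_add_mul_measureReal_add_integral_max_sub hint hs1.le s2
  have hconst : 4 * σ2 * (1 + s2 / (2 * σ2)) = 2 * (2 * σ2) + 2 * s2 := by field_simp; ring
  have hdropped : 0 ≤ s2 * exp (-s2 / (2 * σ2)) := by positivity
  rw [← ofReal_measureReal]
  refine ENNReal.ofReal_le_ofReal ((div_le_iff₀ hs2).2 ?_)
  rw [hconst]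
  linarith

theorem stmt_12 {Ω : Type*} [MeasurableSpace Ω] (μ : Measure Ω)
    [IsProbabilityMeasure μ] (s : Ω → ℝ) (hmeas : Measurable s)
    (hint : Integrable (fun ω => (s ω) ^ 2) μ)
    (hmean : ∫ ω, s ω ∂μ = 0)
    (v σ2 s1 s2 : ℝ) (hv : 0 < v) (hσ2 : 0 < σ2)
    (hvar : v ≤ ∫ ω, (s ω) ^ 2 ∂μ)
    (htail : ∀ a : ℝ, 0 ≤ a →
      μ {ω | a ^ 2 ≤ (s ω) ^ 2} ≤ ENNReal.ofReal (2 * exp (-a ^ 2 / (2 * σ2))))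
    (hs1 : 0 < s1) (hs12 : s1 ≤ s2) :
    ENNReal.ofReal
        ((v - s1 - 4 * σ2 * (1 + s2 / (2 * σ2)) * exp (-s2 / (2 * σ2))) / s2) ≤
      μ {ω | s1 < (s ω) ^ 2} :=
  stmt_12_general μ s hint v σ2 s1 s2 hσ2 hvar htail hs1 hs12
end

section
/- Let W be an n×n symmetric positive definite matrix with W = σ̄² I, K an d×n real matrix with ‖K‖ ≤ κ where κ ≥ 1, and σ_ν² = 2κ²σ̄². Then the (n+d)×(n+d) block matrix M = [[σ̄² I, σ̄² Kᵀ], [σ̄² K, σ̄² K Kᵀ + σ_ν² I]] satisfies M ≽ (σ̄²/2) I. -/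
open Matrix
open scoped Matrix.Norms.L2Operator

/-! Dividing by `σ2`, the Schur complement of the upper-left block `½ I` is
`(2κ² - ½) I - K Kᵀ`, which is positive semidefinite because `K Kᵀ ≼ ‖K‖² I ≼ κ² I`
and `κ ≥ 1`. -/

namespace Matrix

variable {m n : Type*} [Fintype m] [Fintype n] [DecidableEq m] [DecidableEq n]

omit [DecidableEq m] in
lemma dotProduct_self_eq_norm_sq (x : m → ℝ) :
    x ⬝ᵥ x = ‖(EuclideanSpace.equiv m ℝ).symm x‖ ^ 2 := by
  rw [← real_inner_self_eq_norm_sq]; rfl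

omit [DecidableEq m] in
lemma mulVec_dotProduct_mulVec_self_le (A : Matrix m n ℝ) (x : n → ℝ) :
    A *ᵥ x ⬝ᵥ A *ᵥ x ≤ ‖A‖ ^ 2 * (x ⬝ᵥ x) := by
  rw [dotProduct_self_eq_norm_sq, dotProduct_self_eq_norm_sq, ← mul_pow]
  exact pow_le_pow_left₀ (norm_nonneg _) (A.l2_opNorm_mulVec _) 2

lemma posSemidef_smul_one_sub_mul_transpose (K : Matrix m n ℝ) {c : ℝ}
    (hc : ‖K‖ ^ 2 ≤ c) : (c • 1 - K * Kᵀ).PosSemidef := by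
  refine .of_dotProduct_mulVec_nonneg ?_ fun x => ?_
  · simp [IsHermitian, sub_eq_add_neg]
  · have hKT : ‖Kᵀ‖ = ‖K‖ := K.l2_opNorm_conjTranspose
    have hbound := Kᵀ.mulVec_dotProduct_mulVec_self_le x
    rw [hKT] at hbound
    have hform : x ⬝ᵥ (K * Kᵀ) *ᵥ x = Kᵀ *ᵥ x ⬝ᵥ Kᵀ *ᵥ x := by
      rw [← mulVec_mulVec, dotProduct_mulVec, ← mulVec_transpose]
    simp only [star_trivial, sub_mulVec, smul_mulVec, one_mulVec, dotProduct_sub,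
      dotProduct_smul, smul_eq_mul, hform, sub_nonneg]
    have hx : 0 ≤ x ⬝ᵥ x := by simpa using dotProduct_star_self_nonneg x
    exact hbound.trans (mul_le_mul_of_nonneg_right hc hx)

lemma posSemidef_fromBlocks_inv_two_smul_one (K : Matrix m n ℝ) {e : ℝ} (he : ‖K‖ ^ 2 ≤ e) :
    (fromBlocks ((2 : ℝ)⁻¹ • (1 : Matrix n n ℝ)) Kᵀ K (K * Kᵀ + e • 1)).PosSemidef := by
  have hA : ((2 : ℝ)⁻¹ • (1 : Matrix n n ℝ)).PosDef := PosDef.one.smul (by norm_num)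
  have hAinv : (2 : ℝ)⁻¹ • (1 : Matrix n n ℝ) * (2 : ℝ) • 1 = 1 := by
    rw [smul_mul_smul_comm, one_mul]; norm_num
  let := invertibleOfRightInverse _ _ hAinv
  have hschur : K * Kᵀ + e • 1 - Kᵀᴴ * ((2 : ℝ)⁻¹ • (1 : Matrix n n ℝ))⁻¹ * Kᵀ =
      e • 1 - K * Kᵀ := by
    rw [inv_eq_right_inv hAinv, conjTranspose_eq_transpose_of_trivial, transpose_transpose,
      Matrix.mul_smul, Matrix.mul_one, smul_mul, two_smul]
    abel
  have := (PosDef.fromBlocks₁₁ Kᵀ (K * Kᵀ + e • 1) hA).mpr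
  rw [hschur, conjTranspose_eq_transpose_of_trivial, transpose_transpose] at this
  exact this (posSemidef_smul_one_sub_mul_transpose K he)

end Matrix

theorem stmt_16 {n d : ℕ} (K : Matrix (Fin d) (Fin n) ℝ)
    (κ σ2 : ℝ) (hκ : 1 ≤ κ) (hσ2 : 0 < σ2) (hK : ‖K‖ ≤ κ) :
    (Matrix.fromBlocks
        (σ2 • (1 : Matrix (Fin n) (Fin n) ℝ)) (σ2 • Kᵀ)
        (σ2 • K) (σ2 • (K * Kᵀ) + (2 * κ ^ 2 * σ2) • (1 : Matrix (Fin d) (Fin d) ℝ)) -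
      (σ2 / 2) • (1 : Matrix (Fin n ⊕ Fin d) (Fin n ⊕ Fin d) ℝ)).PosSemidef := by
  have hnorm : ‖K‖ ^ 2 ≤ 2 * κ ^ 2 - 2⁻¹ := by
    nlinarith [pow_le_pow_left₀ (norm_nonneg K) hK 2]
  convert (posSemidef_fromBlocks_inv_two_smul_one K hnorm).smul hσ2.le using 1
  rw [← fromBlocks_one, fromBlocks_smul, fromBlocks_smul, sub_eq_add_neg, fromBlocks_neg,
    fromBlocks_add]
  congr 1 <;> module
end
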